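/- Suppose R > 0, c₀ > 0 and h₀ ∈ (0,1] are such that a_h(x)² ≤ (1 + c₀)^{−1} for all |x| ≥ R and all h ∈ (0, h₀]. Then for every measurable χ : ℝ^d → [0,1] with χ = 1 on the ball B(0,R), every h ∈ (0, h₀] and every u ∈ L²(ℝ^d): ⟨(1−χ)·T_h((1−χ)·u), u⟩ ≤ (1 + c₀)^{−1} ‖u‖². -/

import Mathlib

open MeasureTheory

noncomputable section

/-- Euclidean space `ℝ^d`. -/
abbrev Euc (d : ℕ) := EuclideanSpace ℝ (Fin d)

/-- The space `L²(ℝ^d, dx)`. -/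
abbrev L2 (d : ℕ) := Lp ℝ 2 (volume : Measure (Euc d))

/-- The Lebesgue volume `α_d` of the unit ball of `ℝ^d`. -/
def unitBallVol (d : ℕ) : ℝ :=
  (volume (Metric.ball (0 : Euc d) 1)).toReal

/-- `a_h(x) := ((α_d h^d)⁻¹ ∫_{|x−y|<h} e^{(φ(x)−φ(y))/h} dy)^{-1/2}`. -/
def ahFun (d : ℕ) (φ : Euc d → ℝ) (h : ℝ) (x : Euc d) : ℝ :=
  ((unitBallVol d * h ^ d)⁻¹ *
    ∫ y in Metric.ball x h, Real.exp ((φ x - φ y) / h)) ^ (-(1 / 2) : ℝ)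

/-- `𝒢_h u(x) := (α_d h^d)⁻¹ ∫_{|x−y|<h} u(y) dy`. -/
def avgOp (d : ℕ) (h : ℝ) (u : Euc d → ℝ) (x : Euc d) : ℝ :=
  (unitBallVol d * h ^ d)⁻¹ * ∫ y in Metric.ball x h, u y

/-- `T` is (a realization on `L²` of) the random walk operator `T_h = a_h 𝒢_h a_h`. -/
def IsRandomWalkOp (d : ℕ) (φ : Euc d → ℝ) (h : ℝ) (T : L2 d →L[ℝ] L2 d) : Prop :=
  ∀ u : L2 d, (T u : Euc d → ℝ) =ᵐ[volume]
    fun x => ahFun d φ h x * avgOp d h (fun y => ahFun d φ h y * (u : Euc d → ℝ) y) x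

/-- Auxiliary: measurability of ball averages of a jointly measurable function. -/
lemma measurable_ballIntegral {d : ℕ} (h : ℝ) {g : Euc d × Euc d → ℝ}
    (hg : Measurable g) :
    Measurable fun x => ∫ y in Metric.ball x h, g (x, y) := by
  have key : ∀ x, (∫ y in Metric.ball x h, g (x, y))
      = ∫ y, (fun p : Euc d × Euc d =>
          if dist p.2 p.1 < h then g p else 0) (x, y) := by
    intro x
    rw [← integral_indicator measurableSet_ball]
    exact integral_congr_ae (Filter.Eventually.of_forall fun y => by
      by_cases hy : dist y x < h <;> simp [Set.indicator_apply, Metric.mem_ball, hy])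
  simp_rw [key]
  have hm : Measurable (fun p : Euc d × Euc d =>
      if dist p.2 p.1 < h then g p else 0) := by
    apply Measurable.ite _ hg measurable_const
    exact measurableSet_lt (by fun_prop) measurable_const
  exact (hm.stronglyMeasurable.integral_prod_right').measurable

/-- Auxiliary: measurability of `ahFun`. -/
lemma measurable_ahFun (d : ℕ) (φ : Euc d → ℝ) (hφ : Continuous φ) (h : ℝ) (hh : 0 < h) :
    Measurable (ahFun d φ h) := by
  have hF : Measurable fun x : Euc d => ∫ y in Metric.ball x h,
      Real.exp ((φ x - φ y) / h) := by
    apply measurable_ballIntegral (g := fun p : Euc d × Euc d =>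
      Real.exp ((φ p.1 - φ p.2) / h))
    fun_prop
  have hbase : ∀ x : Euc d, 0 ≤ (unitBallVol d * h ^ d)⁻¹ *
      ∫ y in Metric.ball x h, Real.exp ((φ x - φ y) / h) := by
    intro x
    apply mul_nonneg
    · apply inv_nonneg.mpr
      exact mul_nonneg ENNReal.toReal_nonneg (pow_nonneg hh.le d)
    · exact integral_nonneg fun y => (Real.exp_pos _).le
  have heq : ahFun d φ h = fun x => (Real.sqrt ((unitBallVol d * h ^ d)⁻¹ *
      ∫ y in Metric.ball x h, Real.exp ((φ x - φ y) / h)))⁻¹ := by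
    funext x
    rw [ahFun, Real.rpow_neg (hbase x), Real.sqrt_eq_rpow]
  rw [heq]
  exact (Real.continuous_sqrt.measurable.comp (measurable_const.mul hF)).inv

set_option maxHeartbeats 1000000 in
/-- If `a_h(x)² ≤ (1 + c₀)⁻¹` for `|x| ≥ R` and `h ∈ (0, h₀]`, then
for every measurable `χ : ℝ^d → [0,1]` equal to `1` on `B(0,R)` and every `u ∈ L²`,
`⟨(1−χ)·T_h((1−χ)·u), u⟩ ≤ (1 + c₀)⁻¹ ‖u‖²`. -/
theorem essential_spectrum_bound (d : ℕ) (hd : 1 ≤ d) (φ : Euc d → ℝ)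
    (hφ : ContDiff ℝ (⊤ : ℕ∞) φ)
    (Cg : ℝ) (hCg : ∀ x, ‖gradient φ x‖ ≤ Cg)
    (R c₀ h₀ : ℝ) (hR : 0 < R) (hc₀ : 0 < c₀) (hh₀ : h₀ ∈ Set.Ioc (0 : ℝ) 1)
    (ha : ∀ x : Euc d, R ≤ ‖x‖ → ∀ h ∈ Set.Ioc (0 : ℝ) h₀,
      (ahFun d φ h x) ^ 2 ≤ (1 + c₀)⁻¹)
    (χ : Euc d → ℝ) (hχmeas : Measurable χ) (hχ01 : ∀ x, χ x ∈ Set.Icc (0 : ℝ) 1)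
    (hχ1 : ∀ x ∈ Metric.ball (0 : Euc d) R, χ x = 1)
    (T : ℝ → (L2 d →L[ℝ] L2 d))
    (hT : ∀ h ∈ Set.Ioc (0 : ℝ) h₀, IsRandomWalkOp d φ h (T h)) :
    ∀ h ∈ Set.Ioc (0 : ℝ) h₀, ∀ u v w : L2 d,
      (v : Euc d → ℝ) =ᵐ[volume] (fun x => (1 - χ x) * (u : Euc d → ℝ) x) →
      (w : Euc d → ℝ) =ᵐ[volume] (fun x => (1 - χ x) * (T h v : Euc d → ℝ) x) →
      (inner ℝ w u : ℝ) ≤ (1 + c₀)⁻¹ * ‖u‖ ^ 2 := by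
  intro h hh u v w hv hw
  obtain ⟨hh1, hh2⟩ := hh
  haveI : Nonempty (Fin d) := ⟨⟨0, hd⟩⟩
  haveI : Nontrivial (Euc d) := inferInstance
  set a : Euc d → ℝ := ahFun d φ h with ha_def
  set c : ℝ := (unitBallVol d * h ^ d)⁻¹ with hc_def
  -- volume facts
  have hα : 0 < unitBallVol d := by
    refine ENNReal.toReal_pos (ne_of_gt ?_) (measure_ball_lt_top).ne
    exact Metric.measure_ball_pos _ _ one_pos
  have hVpos : 0 < unitBallVol d * h ^ d := mul_pos hα (pow_pos hh1 d)
  have hc : 0 < c := inv_pos.mpr hVpos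
  have hc1 : c * (unitBallVol d * h ^ d) = 1 := inv_mul_cancel₀ (ne_of_gt hVpos)
  have hvolR : ∀ x : Euc d, (volume (Metric.ball x h)).toReal = unitBallVol d * h ^ d := by
    intro x
    rw [Measure.addHaar_ball _ _ hh1.le, ENNReal.toReal_mul,
      ENNReal.toReal_ofReal (by positivity), finrank_euclideanSpace_fin]
    exact mul_comm _ _
  have hvolE : ∀ x : Euc d, volume (Metric.ball x h)
      = ENNReal.ofReal (unitBallVol d * h ^ d) := by
    intro x
    rw [← hvolR x, ENNReal.ofReal_toReal (measure_ball_lt_top).ne]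
  -- a is measurable and nonnegative
  have ham : Measurable a := measurable_ahFun d φ hφ.continuous h hh1
  have han : ∀ x, 0 ≤ a x := by
    intro x
    apply Real.rpow_nonneg
    apply mul_nonneg (inv_nonneg.mpr (by positivity))
    exact integral_nonneg fun y => (Real.exp_pos _).le
  -- measurable representative of u
  set u₀ : Euc d → ℝ := (Lp.aestronglyMeasurable u).mk (u : Euc d → ℝ) with hu₀_def
  have hu₀m : StronglyMeasurable u₀ := (Lp.aestronglyMeasurable u).stronglyMeasurable_mk
  have huu₀ : (u : Euc d → ℝ) =ᵐ[volume] u₀ := (Lp.aestronglyMeasurable u).ae_eq_mk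
  have hu₀2 : MemLp u₀ 2 (volume : Measure (Euc d)) := (Lp.memLp u).ae_eq huu₀
  set f₀ : Euc d → ℝ := fun x => (1 - χ x) * u₀ x * a x with hf₀_def
  have hf₀m : Measurable f₀ :=
    ((measurable_const.sub hχmeas).mul hu₀m.measurable).mul ham
  -- pointwise bound on f₀²
  have hfsq : ∀ x, f₀ x ^ 2 ≤ (1 + c₀)⁻¹ * u₀ x ^ 2 := by
    intro x
    by_cases hx : ‖x‖ < R
    · have hx1 : χ x = 1 := hχ1 x (mem_ball_zero_iff.mpr hx)
      have : f₀ x = 0 := by simp [hf₀_def, hx1]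
      rw [this]
      have hpos : (0:ℝ) < 1 + c₀ := by linarith
      simpa using mul_nonneg (inv_nonneg.mpr hpos.le) (sq_nonneg (u₀ x))
    · push_neg at hx
      have ha2 : a x ^ 2 ≤ (1 + c₀)⁻¹ := ha x hx h ⟨hh1, hh2⟩
      obtain ⟨hχ0, hχle⟩ := hχ01 x
      have h1 : (1 - χ x) ^ 2 ≤ 1 := by nlinarith
      calc f₀ x ^ 2 = (1 - χ x) ^ 2 * (u₀ x ^ 2 * a x ^ 2) := by rw [hf₀_def]; ring
        _ ≤ 1 * (u₀ x ^ 2 * a x ^ 2) :=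
            mul_le_mul_of_nonneg_right h1 (by positivity)
        _ = u₀ x ^ 2 * a x ^ 2 := one_mul _
        _ ≤ u₀ x ^ 2 * (1 + c₀)⁻¹ := mul_le_mul_of_nonneg_left ha2 (sq_nonneg _)
        _ = (1 + c₀)⁻¹ * u₀ x ^ 2 := mul_comm _ _
  -- f₀ is in L²
  have hf₀2 : MemLp f₀ 2 (volume : Measure (Euc d)) := by
    refine MemLp.of_le hu₀2 hf₀m.aestronglyMeasurable ?_
    refine Filter.Eventually.of_forall fun x => ?_
    rw [Real.norm_eq_abs, Real.norm_eq_abs, ← Real.sqrt_sq_eq_abs, ← Real.sqrt_sq_eq_abs]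
    apply Real.sqrt_le_sqrt
    calc f₀ x ^ 2 ≤ (1 + c₀)⁻¹ * u₀ x ^ 2 := hfsq x
      _ ≤ 1 * u₀ x ^ 2 := by
          apply mul_le_mul_of_nonneg_right _ (sq_nonneg _)
          rw [inv_le_one_iff₀]; right; linarith
      _ = u₀ x ^ 2 := one_mul _
  have hf₀sq_int : Integrable (fun x => f₀ x ^ 2) (volume : Measure (Euc d)) :=
    hf₀2.integrable_sq
  have hu₀sq_int : Integrable (fun x => u₀ x ^ 2) (volume : Measure (Euc d)) :=
    hu₀2.integrable_sq
  have hf₀ballint : ∀ x : Euc d, IntegrableOn f₀ (Metric.ball x h) volume := by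
    intro x
    haveI : Fact (volume (Metric.ball x h) < ⊤) := ⟨measure_ball_lt_top⟩
    exact memLp_one_iff_integrable.mp
      (MemLp.mono_exponent (hf₀2.restrict (Metric.ball x h)) one_le_two)
  set S : ℝ := ∫ x, f₀ x ^ 2 with hS_def
  have hS_nonneg : 0 ≤ S := integral_nonneg fun x => sq_nonneg _
  -- the set-average function of f₀²
  set G : Euc d → ℝ := fun x => ∫ y in Metric.ball x h, f₀ y ^ 2 with hG_def
  have hG_meas : Measurable G := by
    apply measurable_ballIntegral (g := fun p : Euc d × Euc d => f₀ p.2 ^ 2)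
    exact (hf₀m.comp measurable_snd).pow_const 2
  have hG_nonneg : ∀ x, 0 ≤ G x := fun x => integral_nonneg fun y => sq_nonneg _
  -- Tonelli computation
  have hind : ∀ (x y : Euc d) (g : Euc d → ENNReal),
      (Metric.ball x h).indicator g y = if dist y x < h then g y else 0 := by
    intro x y g
    by_cases hy : dist y x < h <;> simp [Set.indicator_apply, Metric.mem_ball, hy]
  have hKm : Measurable (fun p : Euc d × Euc d =>
      if dist p.2 p.1 < h then ENNReal.ofReal (f₀ p.2 ^ 2) else 0) := by
    apply Measurable.ite _ (((hf₀m.comp measurable_snd).pow_const 2).ennreal_ofReal)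
      measurable_const
    exact measurableSet_lt (by fun_prop) measurable_const
  have hswap : ∫⁻ x, ENNReal.ofReal (G x)
      = ENNReal.ofReal (unitBallVol d * h ^ d) * ∫⁻ y, ENNReal.ofReal (f₀ y ^ 2) := by
    have step1 : ∀ x, ENNReal.ofReal (G x)
        = ∫⁻ y, (if dist y x < h then ENNReal.ofReal (f₀ y ^ 2) else 0) := by
      intro x
      rw [hG_def]
      rw [ofReal_integral_eq_lintegral_ofReal (hf₀sq_int.integrableOn)
        (Filter.Eventually.of_forall fun y => sq_nonneg _),
        ← lintegral_indicator measurableSet_ball]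
      exact lintegral_congr fun y => hind x y _
    calc ∫⁻ x, ENNReal.ofReal (G x)
        = ∫⁻ x, ∫⁻ y, (if dist y x < h then ENNReal.ofReal (f₀ y ^ 2) else 0) :=
          lintegral_congr step1
      _ = ∫⁻ y, ∫⁻ x, (if dist y x < h then ENNReal.ofReal (f₀ y ^ 2) else 0) := by
          apply lintegral_lintegral_swap
          exact hKm.aemeasurable
      _ = ∫⁻ y, ENNReal.ofReal (f₀ y ^ 2) * volume (Metric.ball y h) := by
          refine lintegral_congr fun y => ?_
          have : ∀ x : Euc d, (if dist y x < h then ENNReal.ofReal (f₀ y ^ 2) else 0)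
              = (Metric.ball y h).indicator (fun _ => ENNReal.ofReal (f₀ y ^ 2)) x := by
            intro x
            rw [hind y x]
            simp [dist_comm]
          simp_rw [this]
          rw [lintegral_indicator measurableSet_ball, setLIntegral_const]
      _ = ENNReal.ofReal (unitBallVol d * h ^ d) * ∫⁻ y, ENNReal.ofReal (f₀ y ^ 2) := by
          simp_rw [hvolE]
          rw [lintegral_mul_const _ (((hf₀m.pow_const 2)).ennreal_ofReal)]
          exact mul_comm _ _
  have hf₀sq_lint : ∫⁻ y, ENNReal.ofReal (f₀ y ^ 2) = ENNReal.ofReal S :=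
    (ofReal_integral_eq_lintegral_ofReal hf₀sq_int
      (Filter.Eventually.of_forall fun y => sq_nonneg _)).symm
  have hG_int : Integrable G (volume : Measure (Euc d)) := by
    refine ⟨hG_meas.aestronglyMeasurable, ?_⟩
    rw [hasFiniteIntegral_iff_ofReal (Filter.Eventually.of_forall hG_nonneg), hswap,
      hf₀sq_lint]
    exact ENNReal.mul_lt_top ENNReal.ofReal_lt_top ENNReal.ofReal_lt_top
  have hG_val : ∫ x, G x = (unitBallVol d * h ^ d) * S := by
    have h1 : ENNReal.ofReal (∫ x, G x) = ENNReal.ofReal ((unitBallVol d * h ^ d) * S) := by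
      rw [ofReal_integral_eq_lintegral_ofReal hG_int
        (Filter.Eventually.of_forall hG_nonneg), hswap, hf₀sq_lint,
        ENNReal.ofReal_mul hVpos.le]
    exact (ENNReal.ofReal_eq_ofReal_iff (integral_nonneg hG_nonneg)
      (mul_nonneg hVpos.le hS_nonneg)).mp h1
  -- the random walk operator applied to v
  have hTv := hT h ⟨hh1, hh2⟩ v
  have hav : (fun y => a y * (v : Euc d → ℝ) y) =ᵐ[volume] f₀ := by
    filter_upwards [hv, huu₀] with y hvy huy
    rw [hvy, hf₀_def, huy]
    ring
  have havg : ∀ x, avgOp d h (fun y => a y * (v : Euc d → ℝ) y) x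
      = c * ∫ y in Metric.ball x h, f₀ y := by
    intro x
    rw [avgOp]
    congr 1
    exact integral_congr_ae (ae_restrict_of_ae hav)
  have hwu : (fun x => (w : Euc d → ℝ) x * (u : Euc d → ℝ) x) =ᵐ[volume]
      (fun x => f₀ x * (c * ∫ y in Metric.ball x h, f₀ y)) := by
    filter_upwards [hw, hTv, huu₀] with x hwx hTx hux
    rw [hwx, hTx, havg, hux, hf₀_def]
    ring
  have hinner_int : Integrable (fun x => (w : Euc d → ℝ) x * (u : Euc d → ℝ) x)
      (volume : Measure (Euc d)) := by
    have := L2.integrable_inner (𝕜 := ℝ) w u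
    simpa [RCLike.inner_apply, conj_trivial, mul_comm] using this
  have hmain : (inner ℝ w u : ℝ) = ∫ x, f₀ x * (c * ∫ y in Metric.ball x h, f₀ y) := by
    rw [L2.inner_def]
    simp_rw [RCLike.inner_apply, conj_trivial]
    have hcomm : (fun x => (u : Euc d → ℝ) x * (w : Euc d → ℝ) x) =ᵐ[volume]
        (fun x => (w : Euc d → ℝ) x * (u : Euc d → ℝ) x) :=
      Filter.Eventually.of_forall fun x => mul_comm _ _
    exact integral_congr_ae (hcomm.trans hwu)
  have hLHS_int : Integrable (fun x => f₀ x * (c * ∫ y in Metric.ball x h, f₀ y))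
      (volume : Measure (Euc d)) := hinner_int.congr hwu
  -- pointwise Cauchy–Schwarz/AM–GM bound
  have hpt : ∀ x, f₀ x * (c * ∫ y in Metric.ball x h, f₀ y)
      ≤ 1 / 2 * f₀ x ^ 2 + c / 2 * G x := by
    intro x
    have e1 : f₀ x * (c * ∫ y in Metric.ball x h, f₀ y)
        = c * ∫ y in Metric.ball x h, f₀ x * f₀ y := by
      rw [integral_const_mul]
      ring
    have e2 : (∫ y in Metric.ball x h, f₀ x * f₀ y)
        ≤ ∫ y in Metric.ball x h, (f₀ x ^ 2 + f₀ y ^ 2) / 2 := by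
      apply integral_mono ((hf₀ballint x).const_mul _)
      · apply Integrable.div_const
        exact (integrableOn_const measure_ball_lt_top.ne).add
          hf₀sq_int.integrableOn
      · intro y
        have := sq_nonneg (f₀ x - f₀ y)
        dsimp only
        nlinarith
    have e3 : (∫ y in Metric.ball x h, (f₀ x ^ 2 + f₀ y ^ 2) / 2)
        = (f₀ x ^ 2 * (unitBallVol d * h ^ d) + G x) / 2 := by
      rw [integral_div, integral_add (integrableOn_const (C := f₀ x ^ 2) measure_ball_lt_top.ne)
        hf₀sq_int.integrableOn, setIntegral_const, measureReal_def, hvolR x, smul_eq_mul]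
      rw [hG_def]
      ring
    calc f₀ x * (c * ∫ y in Metric.ball x h, f₀ y)
        = c * ∫ y in Metric.ball x h, f₀ x * f₀ y := e1
      _ ≤ c * ∫ y in Metric.ball x h, (f₀ x ^ 2 + f₀ y ^ 2) / 2 :=
          mul_le_mul_of_nonneg_left e2 hc.le
      _ = c * ((f₀ x ^ 2 * (unitBallVol d * h ^ d) + G x) / 2) := by rw [e3]
      _ = 1 / 2 * f₀ x ^ 2 + c / 2 * G x := by
          field_simp
          linear_combination f₀ x ^ 2 * hc1
  have hRHS_int : Integrable (fun x => 1 / 2 * f₀ x ^ 2 + c / 2 * G x)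
      (volume : Measure (Euc d)) :=
    (hf₀sq_int.const_mul _).add (hG_int.const_mul _)
  have hRHS_val : (∫ x, (1 / 2 * f₀ x ^ 2 + c / 2 * G x)) = S := by
    rw [integral_add (hf₀sq_int.const_mul _) (hG_int.const_mul _),
      integral_const_mul, integral_const_mul, hG_val, ← hS_def]
    field_simp
    linear_combination S * hc1
  -- norm identity
  have hnorm : (∫ x, u₀ x ^ 2) = ‖u‖ ^ 2 := by
    have h1 : (inner ℝ u u : ℝ) = ∫ x, u₀ x ^ 2 := by
      rw [L2.inner_def]
      simp_rw [RCLike.inner_apply, conj_trivial]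
      refine integral_congr_ae ?_
      filter_upwards [huu₀] with x hux
      rw [hux]; ring
    rw [← h1, real_inner_self_eq_norm_sq]
  -- conclusion
  calc (inner ℝ w u : ℝ)
      = ∫ x, f₀ x * (c * ∫ y in Metric.ball x h, f₀ y) := hmain
    _ ≤ ∫ x, (1 / 2 * f₀ x ^ 2 + c / 2 * G x) := integral_mono hLHS_int hRHS_int hpt
    _ = S := hRHS_val
    _ ≤ (1 + c₀)⁻¹ * ∫ x, u₀ x ^ 2 := by
        rw [← integral_const_mul]
        exact integral_mono hf₀sq_int (hu₀sq_int.const_mul _) hfsq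
    _ = (1 + c₀)⁻¹ * ‖u‖ ^ 2 := by rw [hnorm]
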